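/- arXiv:2508.04134 — 6 statements merged into one kernel-verified Lean document; each statement's English description precedes it below -/
import Mathlib

section
/- For every distribution G on [0,1] with mean ξ ∈ (0,1) and search cost s with 0 < s < ξ, the reservation value a defined by S_G(a) = s, where S_G(t) = ∫_t^1 (v - t) dG(v), satisfies ξ - s ≤ a ≤ 1 - s/ξ. -/
open MeasureTheory

/-- For every distribution `G` on `[0,1]` with mean `ξ ∈ (0,1)` and search cost
`0 < s < ξ`, the reservation value `a` defined by `S_G(a) = s`, where
`S_G(t) = E_G[max t v] - t`, satisfies `ξ - s ≤ a ≤ 1 - s/ξ`. -/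
theorem reservation_value_bounds
    (G : Measure ℝ) [IsProbabilityMeasure G]
    (ξ s a : ℝ)
    (hsupp : ∀ᵐ v ∂G, v ∈ Set.Icc (0 : ℝ) 1)
    (hmean : ∫ v, v ∂G = ξ)
    (hξ : ξ ∈ Set.Ioo (0 : ℝ) 1)
    (hs : 0 < s) (hsξ : s < ξ)
    (ha : (∫ v, max a v ∂G) - a = s) :
    ξ - s ≤ a ∧ a ≤ 1 - s / ξ := by
  have hiv : Integrable (fun v : ℝ => v) G := by
    refine (integrable_const (1 : ℝ)).mono' measurable_id.aestronglyMeasurable ?_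
    filter_upwards [hsupp] with v hv
    rw [Real.norm_eq_abs, abs_le]
    exact ⟨by linarith [hv.1], hv.2⟩
  have him : Integrable (fun v : ℝ => max a v) G := by
    refine (integrable_const (max |a| 1) ).mono'
      (measurable_const.max measurable_id).aestronglyMeasurable ?_
    filter_upwards [hsupp] with v hv
    rw [Real.norm_eq_abs, abs_le]
    constructor
    · have := le_max_left a v
      have : -(max |a| 1) ≤ a := by
        have := neg_abs_le a
        have h1 : -(max |a| 1) ≤ -|a| := by simp [le_max_left]
        linarith
      linarith [le_max_left a v]
    · exact max_le (le_max_of_le_left (le_abs_self a)) (le_max_of_le_right hv.2)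
  -- a < 1
  have ha1 : a < 1 := by
    by_contra h
    push_neg at h
    have : (∫ v, max a v ∂G) = a := by
      have : ∀ᵐ v ∂G, max a v = a := by
        filter_upwards [hsupp] with v hv
        exact max_eq_left (hv.2.trans h)
      rw [integral_congr_ae this, integral_const]
      simp
    rw [this] at ha
    simp at ha
    linarith
  -- lower bound
  have hlow : ξ - s ≤ a := by
    have hle : ξ ≤ ∫ v, max a v ∂G := by
      rw [← hmean]
      exact integral_mono_ae hiv him (Filter.Eventually.of_forall fun v => le_max_right a v)
    linarith
  have ha0 : 0 < a := by linarith
  -- upper bound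
  have hup : a ≤ 1 - s / ξ := by
    have key : s ≤ (1 - a) * ξ := by
      have hsub : (∫ v, max a v ∂G) - a = ∫ v, (max a v - a) ∂G := by
        rw [integral_sub him (integrable_const a), integral_const]
        simp
      have hmono : (∫ v, (max a v - a) ∂G) ≤ ∫ v, (1 - a) * v ∂G := by
        refine integral_mono_ae (him.sub (integrable_const a)) (hiv.const_mul _) ?_
        filter_upwards [hsupp] with v hv
        rcases le_total v a with h | h
        · rw [max_eq_left h]
          have : 0 ≤ (1 - a) * v := mul_nonneg (by linarith) hv.1
          linarith
        · rw [max_eq_right h]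
          nlinarith [hv.1, hv.2, ha0.le, ha1.le]
      rw [hsub] at ha
      rw [integral_const_mul, hmean] at hmono
      linarith
    have hξ0 : 0 < ξ := hξ.1
    have : s / ξ ≤ 1 - a := (div_le_iff₀ hξ0).2 (by linarith [key])
    linarith
  exact ⟨hlow, hup⟩
end

section
/- For ξ ∈ (0,1) and s ∈ (0, ξ), the inequality s/ξ ≥ 1 - √(2(ξ-s) - (ξ-s)²) holds if and only if s ≥ ξ(ξ-1)²/(ξ²+1). -/
/-- For `ξ ∈ (0,1)` and `s ∈ (0,ξ)`, `s/ξ ≥ 1 - √(2(ξ-s) - (ξ-s)²)` holds iff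
`s ≥ ξ(ξ-1)²/(ξ²+1)`. -/
theorem deterrence_price_iff_B1 (ξ s : ℝ) (hξ : ξ ∈ Set.Ioo (0 : ℝ) 1)
    (hs : 0 < s) (hsξ : s < ξ) :
    1 - Real.sqrt (2 * (ξ - s) - (ξ - s) ^ 2) ≤ s / ξ ↔
      ξ * (ξ - 1) ^ 2 / (ξ ^ 2 + 1) ≤ s := by
  obtain ⟨hξ0, hξ1⟩ := hξ
  have h1 : (0:ℝ) ≤ 1 - s / ξ := by
    have : s / ξ ≤ 1 := by
      rw [div_le_one hξ0]; linarith
    linarith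
  have hd : (0:ℝ) < ξ ^ 2 + 1 := by positivity
  have key : (1 - s / ξ) = (ξ - s) / ξ := by field_simp
  rw [sub_le_comm, Real.le_sqrt h1, div_le_iff₀ hd, key, div_pow,
    div_le_iff₀ (by positivity : (0:ℝ) < ξ ^ 2)]
  constructor
  · intro h
    nlinarith [mul_pos (sub_pos.mpr hsξ) hξ0, sq_nonneg (ξ - s)]
  · intro h
    nlinarith [sq_nonneg (ξ - s), mul_pos hξ0 hξ0]
  nlinarith [mul_pos (sub_pos.mpr hsξ) (show (0:ℝ) < 2 - (ξ - s) by linarith)]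
end

section
/- For ξ ∈ (0,1) and s ∈ (0,ξ), s/ξ < (1 - √(ξ-s))² if and only if s < ξ(ξ-1)²/(ξ+1)². -/
/-- For `ξ ∈ (0,1)` and `s ∈ (0,ξ)`, `s/ξ < (1 - √(ξ-s))²` iff `s < ξ(ξ-1)²/(ξ+1)²`. -/
theorem deterrence_price_iff_B2 (ξ s : ℝ) (hξ : ξ ∈ Set.Ioo (0 : ℝ) 1)
    (hs : 0 < s) (hsξ : s < ξ) :
    s / ξ < (1 - Real.sqrt (ξ - s)) ^ 2 ↔ s < ξ * (ξ - 1) ^ 2 / (ξ + 1) ^ 2 := by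
  obtain ⟨hξ0, hξ1⟩ := hξ
  set r := Real.sqrt (ξ - s) with hr
  have hr2 : r ^ 2 = ξ - s := Real.sq_sqrt (by linarith)
  have hr0 : 0 < r := Real.sqrt_pos.2 (by linarith)
  have hξ1' : (0:ℝ) < ξ + 1 := by linarith
  have key1 : s / ξ < (1 - r) ^ 2 ↔ 2 * ξ < r * (ξ + 1) := by
    rw [div_lt_iff₀ hξ0]
    constructor <;> intro h
    · nlinarith [hr0, hr2]
    · nlinarith [mul_pos hr0 (sub_pos.2 h), hr2]
  have key2 : s < ξ * (ξ - 1) ^ 2 / (ξ + 1) ^ 2 ↔ 2 * ξ < r * (ξ + 1) := by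
    rw [lt_div_iff₀ (by positivity)]
    constructor <;> intro h
    · nlinarith [hr2, mul_pos hr0 hξ1', mul_pos hξ0 (mul_pos hr0 hξ1')]
    · nlinarith [hr2, mul_pos (mul_pos hξ0 (by norm_num : (0:ℝ) < 2)) (sub_pos.2 h),
        mul_pos hr0 hξ1']
  rw [key1, key2]
end

section
/- For ξ ∈ (0,1) and s ∈ (0,ξ) with s < ξ(ξ-1)²/(ξ²+1), the following chain of strict inequalities holds: s/ξ < 1 - √(2(ξ-s) - (ξ-s)²) < (1 - √(2(ξ-s) - (ξ-s)²))/(1 - ξ + s) < 1 - √(ξ-s). -/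
/-- For `ξ ∈ (0,1)` and `s ∈ (0,ξ)` with `s < ξ(ξ-1)²/(ξ²+1)`:
`s/ξ < 1 - √(2(ξ-s)-(ξ-s)²) < (1 - √(2(ξ-s)-(ξ-s)²))/(1-ξ+s) < 1 - √(ξ-s)`. -/
theorem price_chain (ξ s : ℝ) (hξ : ξ ∈ Set.Ioo (0 : ℝ) 1)
    (hs : 0 < s) (hsξ : s < ξ) (hB1 : s < ξ * (ξ - 1) ^ 2 / (ξ ^ 2 + 1)) :
    s / ξ < 1 - Real.sqrt (2 * (ξ - s) - (ξ - s) ^ 2) ∧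
    1 - Real.sqrt (2 * (ξ - s) - (ξ - s) ^ 2) <
      (1 - Real.sqrt (2 * (ξ - s) - (ξ - s) ^ 2)) / (1 - ξ + s) ∧
    (1 - Real.sqrt (2 * (ξ - s) - (ξ - s) ^ 2)) / (1 - ξ + s) <
      1 - Real.sqrt (ξ - s) := by
  obtain ⟨hξ0, hξ1⟩ := hξ
  have ht0 : 0 < ξ - s := by linarith
  have ht1 : ξ - s < 1 := by linarith
  set A := Real.sqrt (2 * (ξ - s) - (ξ - s) ^ 2) with hA
  set B := Real.sqrt (ξ - s) with hB
  have harg : 0 < 2 * (ξ - s) - (ξ - s) ^ 2 := by nlinarith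
  have hA_sq : A ^ 2 = 2 * (ξ - s) - (ξ - s) ^ 2 := Real.sq_sqrt harg.le
  have hA_nn : 0 ≤ A := Real.sqrt_nonneg _
  have hA_lt1 : A < 1 := by nlinarith
  have hB_sq : B ^ 2 = ξ - s := Real.sq_sqrt ht0.le
  have hB_nn : 0 ≤ B := Real.sqrt_nonneg _
  have hB_lt1 : B < 1 := by nlinarith
  have hd : 0 < 1 - ξ + s := by linarith
  -- hB1 cleared of division
  have hB1' : s * (ξ ^ 2 + 1) < ξ * (ξ - 1) ^ 2 := by
    have h2 : (0:ℝ) < ξ ^ 2 + 1 := by positivity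
    rw [lt_div_iff₀ h2] at hB1
    linarith
  refine ⟨?_, ?_, ?_⟩
  · -- s/ξ < 1 - A, i.e. A < (ξ - s)/ξ
    have hkey : A < (ξ - s) / ξ := by
      have hc : 0 < (ξ - s) / ξ := by positivity
      have hsq : A ^ 2 < ((ξ - s) / ξ) ^ 2 := by
        rw [hA_sq, div_pow, lt_div_iff₀ (by positivity)]
        nlinarith
      nlinarith
    rw [lt_div_iff₀ hξ0] at hkey
    rw [div_lt_iff₀ hξ0]
    nlinarith
  · rw [lt_div_iff₀ hd]
    nlinarith
  · rw [div_lt_iff₀ hd]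
    -- need 1 - A < (1 - B) * (1 - ξ + s), from (ξ-s) + B*(1-ξ+s) < A
    have hkey : (ξ - s) + B * (1 - ξ + s) < A := by
      have h2B : 2 * B < 1 + (ξ - s) := by nlinarith [sq_nonneg (1 - B)]
      have hexp : 2 * (ξ - s) - (ξ - s) ^ 2 - ((ξ - s) + B * (1 - ξ + s)) ^ 2 =
          (ξ - s) * (1 - ξ + s) * (1 + (ξ - s) - 2 * B) := by
        linear_combination (-(1 - ξ + s) ^ 2) * hB_sq
      have hpos : 0 < (ξ - s) * (1 - ξ + s) * (1 + (ξ - s) - 2 * B) :=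
        mul_pos (mul_pos ht0 hd) (by linarith)
      have hsq : ((ξ - s) + B * (1 - ξ + s)) ^ 2 < A ^ 2 := by
        rw [hA_sq]; linarith
      have hXnn : 0 ≤ (ξ - s) + B * (1 - ξ + s) := by positivity
      rw [hA_sq] at hsq
      exact hA ▸ (Real.lt_sqrt hXnn).mpr hsq
    have hexp2 : (1 - B) * (1 - ξ + s) = 1 - ξ + s - B * (1 - ξ + s) := by ring
    linarith
end

section
/- Fix ξ ∈ (0,1) and s ∈ (0,ξ), and let c = ξ - s ∈ (0,1). The function ψ(p) = (2μ p/(1+p))(1 - c/(1-p)) on p ∈ (0, 1 - √(2c - c²)] (assuming 2c - c² < 1) attains its maximum over p ∈ [0,1) at p = (1 - √(2c - c²))/(1 - c), with maximum value μ(1 - √(2c - c²)). -/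
/-- For `μ ∈ (0,1)` and `c = ξ - s ∈ (0,1)` with `2c - c² < 1`, the function
`ψ(p) = (2μp/(1+p))(1 - c/(1-p))` attains its maximum over `p ∈ [0,1)` at
`p* = (1 - √(2c - c²))/(1 - c) ∈ (0,1)`, with maximum value `μ(1 - √(2c - c²))`. -/
theorem psi_max (μ c : ℝ) (hμ : μ ∈ Set.Ioo (0 : ℝ) 1) (hc : c ∈ Set.Ioo (0 : ℝ) 1)
    (hlt : 2 * c - c ^ 2 < 1) :
    (1 - Real.sqrt (2 * c - c ^ 2)) / (1 - c) ∈ Set.Ioo (0 : ℝ) 1 ∧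
    (∀ p ∈ Set.Ico (0 : ℝ) 1,
        (2 * μ * p / (1 + p)) * (1 - c / (1 - p)) ≤
          (2 * μ * ((1 - Real.sqrt (2 * c - c ^ 2)) / (1 - c)) /
              (1 + (1 - Real.sqrt (2 * c - c ^ 2)) / (1 - c))) *
            (1 - c / (1 - (1 - Real.sqrt (2 * c - c ^ 2)) / (1 - c)))) ∧
    (2 * μ * ((1 - Real.sqrt (2 * c - c ^ 2)) / (1 - c)) /
        (1 + (1 - Real.sqrt (2 * c - c ^ 2)) / (1 - c))) *
      (1 - c / (1 - (1 - Real.sqrt (2 * c - c ^ 2)) / (1 - c))) =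
      μ * (1 - Real.sqrt (2 * c - c ^ 2)) := by
  obtain ⟨hμ0, hμ1⟩ := hμ
  obtain ⟨hc0, hc1⟩ := hc
  set r := Real.sqrt (2 * c - c ^ 2) with hrdef
  have hpos : (0 : ℝ) < 2 * c - c ^ 2 := by nlinarith
  have hr2 : r ^ 2 = 2 * c - c ^ 2 := Real.sq_sqrt hpos.le
  have hr0 : 0 < r := Real.sqrt_pos.mpr hpos
  have hr1 : r < 1 := by nlinarith [hr2, hr0]
  have hcr : c < r := by nlinarith [hr2, hr0]
  have h1c : 0 < 1 - c := by linarith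
  have hmem : (1 - r) / (1 - c) ∈ Set.Ioo (0 : ℝ) 1 := by
    constructor
    · exact div_pos (by linarith) h1c
    · rw [div_lt_one h1c]; linarith
  have hne1 : (1 : ℝ) + (1 - r) / (1 - c) ≠ 0 := by nlinarith [hmem.1]
  have hne2 : (1 : ℝ) - (1 - r) / (1 - c) ≠ 0 := by
    have : (1 - r) / (1 - c) < 1 := hmem.2
    intro h; nlinarith [this]
  have hval : (2 * μ * ((1 - r) / (1 - c)) / (1 + (1 - r) / (1 - c))) *
      (1 - c / (1 - (1 - r) / (1 - c))) = μ * (1 - r) := by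
    have e1 : 1 + (1 - r) / (1 - c) = (2 - c - r) / (1 - c) := by field_simp; ring
    have e2 : 1 - (1 - r) / (1 - c) = (r - c) / (1 - c) := by field_simp; ring
    have h3 : 0 < 2 - c - r := by linarith
    have h4 : 0 < r - c := by linarith
    rw [e1, e2]
    field_simp
    linear_combination (1 - r) * hr2
  refine ⟨hmem, ?_, hval⟩
  intro p hp
  rw [hval]
  obtain ⟨hp0, hp1⟩ := hp
  have h1p : 0 < 1 - p := by linarith
  have h1pp : 0 < 1 + p := by linarith
  rw [div_mul_eq_mul_div, div_le_iff₀ h1pp]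
  have key : 2 * p * (1 - p - c) ≤ (1 - r) * ((1 - p) * (1 + p)) := by
    nlinarith [sq_nonneg ((1 + r) * p - (1 - c)), hr2, hr0.le]
  have hexp : 2 * μ * p * (1 - c / (1 - p)) = μ * (2 * p * (1 - p - c)) / (1 - p) := by
    field_simp
  rw [hexp, div_le_iff₀ h1p]
  nlinarith [mul_le_mul_of_nonneg_left key hμ0.le]
end

section
/- For ξ ∈ (0,1) fixed, define the robust price p_r(s) = (1 - √(2(ξ-s)-(ξ-s)²))/(1-ξ+s) for s on an interval where this formula applies, and p_r(s) = s/ξ on the deterrence region. Then both branch functions s ↦ (1 - √(2(ξ-s)-(ξ-s)²))/(1-ξ+s) and s ↦ s/ξ are increasing in s on (0, ξ), yet at any switching point ŝ < B_1(ξ) := ξ(ξ-1)²/(ξ²+1), the left branch value strictly exceeds the right branch value: (1 - √(2(ξ-ŝ)-(ξ-ŝ)²))/(1-ξ+ŝ) > ŝ/ξ. -/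
/-- Helper: `u ↦ (1 - √(1-u²))/u` is monotone on `(0,1)`. -/
lemma branch_aux (u₁ u₂ : ℝ) (h1 : 0 < u₁) (h2 : u₁ ≤ u₂) (h3 : u₂ < 1) :
    (1 - Real.sqrt (1 - u₁ ^ 2)) / u₁ ≤ (1 - Real.sqrt (1 - u₂ ^ 2)) / u₂ := by
  have hu2 : 0 < u₂ := h1.trans_le h2
  have ha1 : (0:ℝ) ≤ 1 - u₁ ^ 2 := by nlinarith
  have ha2 : (0:ℝ) ≤ 1 - u₂ ^ 2 := by nlinarith
  set A := Real.sqrt (1 - u₁ ^ 2) with hAdef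
  set B := Real.sqrt (1 - u₂ ^ 2) with hBdef
  have hA : A ^ 2 = 1 - u₁ ^ 2 := Real.sq_sqrt ha1
  have hB : B ^ 2 = 1 - u₂ ^ 2 := Real.sq_sqrt ha2
  have hAnn : 0 ≤ A := Real.sqrt_nonneg _
  have hBnn : 0 ≤ B := Real.sqrt_nonneg _
  have hBA : B ≤ A := Real.sqrt_le_sqrt (by nlinarith)
  have e1 : (1 - A) / u₁ = u₁ / (1 + A) := by
    rw [div_eq_div_iff h1.ne' (by positivity)]
    linear_combination -hA
  have e2 : (1 - B) / u₂ = u₂ / (1 + B) := by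
    rw [div_eq_div_iff hu2.ne' (by positivity)]
    linear_combination -hB
  rw [e1, e2]
  exact div_le_div₀ hu2.le h2 (by positivity) (by linarith)

/-- Both branches of the robust price, `s ↦ (1 - √(2(ξ-s)-(ξ-s)²))/(1-ξ+s)` and
`s ↦ s/ξ`, are increasing in `s` on `(0,ξ)`, yet at any switching point
`shat < B₁(ξ) = ξ(ξ-1)²/(ξ²+1)` the left branch strictly exceeds the right branch. -/
theorem robust_price_jump (ξ : ℝ) (hξ : ξ ∈ Set.Ioo (0 : ℝ) 1) :
    MonotoneOn (fun s : ℝ =>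
        (1 - Real.sqrt (2 * (ξ - s) - (ξ - s) ^ 2)) / (1 - ξ + s)) (Set.Ioo 0 ξ) ∧
    MonotoneOn (fun s : ℝ => s / ξ) (Set.Ioo 0 ξ) ∧
    ∀ shat ∈ Set.Ioo (0 : ℝ) ξ, shat < ξ * (ξ - 1) ^ 2 / (ξ ^ 2 + 1) →
      shat / ξ < (1 - Real.sqrt (2 * (ξ - shat) - (ξ - shat) ^ 2)) / (1 - ξ + shat) := by
  obtain ⟨hξ0, hξ1⟩ := hξ
  refine ⟨?_, ?_, ?_⟩
  · intro s₁ hs₁ s₂ hs₂ h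
    simp only
    have r1 : 2 * (ξ - s₁) - (ξ - s₁) ^ 2 = 1 - (1 - ξ + s₁) ^ 2 := by ring
    have r2 : 2 * (ξ - s₂) - (ξ - s₂) ^ 2 = 1 - (1 - ξ + s₂) ^ 2 := by ring
    rw [r1, r2]
    exact branch_aux _ _ (by linarith [hs₁.1]) (by linarith) (by linarith [hs₂.2])
  · intro s₁ _ s₂ _ h
    simp only
    gcongr
  · intro shat ⟨hs0, hsξ⟩ hcond
    have hu0 : 0 < 1 - ξ + shat := by linarith
    have hu1 : 1 - ξ + shat < 1 := by linarith
    have hcond' : shat * (ξ ^ 2 + 1) < ξ * (ξ - 1) ^ 2 := by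
      rw [lt_div_iff₀ (by positivity)] at hcond
      linarith
    have r : 2 * (ξ - shat) - (ξ - shat) ^ 2 = 1 - (1 - ξ + shat) ^ 2 := by ring
    rw [r]
    set A := Real.sqrt (1 - (1 - ξ + shat) ^ 2) with hAdef
    have hAlt : A < (ξ - shat) / ξ := by
      rw [hAdef, show (ξ - shat) / ξ = Real.sqrt (((ξ - shat) / ξ) ^ 2) from
        (Real.sqrt_sq (div_nonneg (by linarith) hξ0.le)).symm]
      apply Real.sqrt_lt_sqrt (by nlinarith)
      rw [div_pow, lt_div_iff₀ (by positivity)]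
      nlinarith [mul_pos (sub_pos.mpr hsξ)
        (show (0:ℝ) < (ξ - shat) * (1 + ξ ^ 2) - 2 * ξ ^ 2 by nlinarith)]
    have h1 : shat / ξ < 1 - A := by
      have : shat / ξ + (ξ - shat) / ξ = 1 := by field_simp; ring
      linarith
    have hAnn : 0 ≤ A := Real.sqrt_nonneg _
    have hposA : 0 < 1 - A := lt_trans (div_pos hs0 hξ0) h1
    have h2 : 1 - A ≤ (1 - A) / (1 - ξ + shat) := by
      rw [le_div_iff₀ hu0]
      nlinarith [mul_nonneg hposA.le (show (0:ℝ) ≤ 1 - (1 - ξ + shat) by linarith)]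
    linarith
end
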